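/- For 0 < |q| < 1 and p = q^{2k} with k a nonzero integer, and any positive integer m, the exchange function 𝒴(x) = [∏_{s=1}^{2m-1} x²·ϑ_{q⁴}(x^{-2}p^s)ϑ_{q⁴}(x²q²p^s)/(ϑ_{q⁴}(x²p^s)ϑ_{q⁴}(x^{-2}q²p^s))]² equals 1 identically (on its domain of definition). -/

import Mathlib

open Complex Finset

/-- The q-Pochhammer infinite product `(x;a)_∞ = ∏_{n≥0} (1 - x aⁿ)`. -/
noncomputable def qPoch (x a : ℂ) : ℂ := ∏' n : ℕ, (1 - x * a ^ n)

/-- The Jacobi theta function `ϑ_a(x) = (x;a)_∞ (a x⁻¹;a)_∞ (a;a)_∞`. -/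
noncomputable def theta (a x : ℂ) : ℂ := qPoch x a * qPoch (a * x⁻¹) a * qPoch a a

/-- The exchange function `𝒴(x)` of eq. (2.10), for positive `m`. -/
noncomputable def Yexch (q p : ℂ) (m : ℕ) (x : ℂ) : ℂ :=
  (∏ s ∈ Finset.Icc 1 (2 * m - 1),
    x ^ 2 * theta (q ^ 4) (x⁻¹ ^ 2 * p ^ (s : ℤ)) * theta (q ^ 4) (x ^ 2 * q ^ 2 * p ^ (s : ℤ)) /
      (theta (q ^ 4) (x ^ 2 * p ^ (s : ℤ)) * theta (q ^ 4) (x⁻¹ ^ 2 * q ^ 2 * p ^ (s : ℤ)))) ^ 2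

/-!
Write `ϑ = ϑ_a` with `a = b²` (here `b = q²`). The functional equations `ϑ(y⁻¹) = -y⁻¹ ϑ(y)` and
`ϑ(a y) = -y⁻¹ ϑ(y)` show that the relation `u ϑ(v) ϑ(b u) = -c ϑ(u) ϑ(b v)` is preserved under
`(v, c) ↦ (a v, b c)`. It holds for `(v, c) = (u⁻¹, 1)`, hence for `(v, c) = (aⁿ u⁻¹, bⁿ)`,
`n ∈ ℤ`. Since `pˢ = b^{ks}`, taking `u = x² pˢ` makes every factor of the product equal to `-1`,
so its square is `1`.
-/

lemma multipliable_one_sub_mul_pow (x : ℂ) {a : ℂ} (ha : ‖a‖ < 1) :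
    Multipliable fun n : ℕ => 1 - x * a ^ n := by
  simpa [sub_eq_add_neg] using multipliable_one_add_of_summable (f := fun n : ℕ => -(x * a ^ n))
    (by simpa using (summable_geometric_of_lt_one (norm_nonneg a) ha).mul_left ‖x‖)

lemma qPoch_eq_one_sub_mul (x : ℂ) {a : ℂ} (ha : ‖a‖ < 1) :
    qPoch x a = (1 - x) * qPoch (a * x) a := by
  have hshift : ∀ n : ℕ, 1 - x * a ^ (n + 1) = 1 - a * x * a ^ n := fun n => by ring
  have htail : Multipliable fun n : ℕ => 1 - x * a ^ (n + 1) := by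
    simpa only [hshift] using multipliable_one_sub_mul_pow (a * x) ha
  rw [qPoch, tprod_eq_zero_mul' (f := fun n => 1 - x * a ^ n) htail, pow_zero, mul_one, qPoch]
  simp only [hshift]

section theta

variable {a : ℂ} (ha : ‖a‖ < 1)
include ha

lemma theta_inv {y : ℂ} (hy : y ≠ 0) : theta a y⁻¹ = -y⁻¹ * theta a y := by
  unfold theta
  rw [inv_inv, qPoch_eq_one_sub_mul y⁻¹ ha, qPoch_eq_one_sub_mul y ha,
    show (1 : ℂ) - y⁻¹ = -y⁻¹ * (1 - y) by field_simp; ring]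
  ring

lemma theta_mul_self (ha0 : a ≠ 0) {y : ℂ} (hy : y ≠ 0) :
    theta a (a * y) = -y⁻¹ * theta a y := by
  unfold theta
  rw [show a * (a * y)⁻¹ = y⁻¹ by field_simp, qPoch_eq_one_sub_mul y⁻¹ ha,
    qPoch_eq_one_sub_mul y ha, show (1 : ℂ) - y⁻¹ = -y⁻¹ * (1 - y) by field_simp; ring]
  ring

lemma theta_mul_inv (ha0 : a ≠ 0) {y : ℂ} (hy : y ≠ 0) : theta a (a * y⁻¹) = theta a y := by
  rw [theta_mul_self ha ha0 (inv_ne_zero hy), inv_inv, theta_inv ha hy]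
  field_simp

variable (ha0 : a ≠ 0) {b : ℂ} (hb : b ≠ 0)
include ha0 hb

lemma theta_exchange_mul_iff {u v : ℂ} (hv : v ≠ 0) (c : ℂ) :
    u * theta a (a * v) * theta a (b * u) = -(b * c * theta a u * theta a (b * (a * v))) ↔
      u * theta a v * theta a (b * u) = -(c * theta a u * theta a (b * v)) := by
  rw [show b * (a * v) = a * (b * v) by ring, theta_mul_self ha ha0 hv,
    theta_mul_self ha ha0 (mul_ne_zero hb hv), mul_inv, ← mul_right_inj' (neg_ne_zero.2 hv)]
  constructor <;> intro h <;> field_simp at h ⊢ <;> linear_combination h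

lemma theta_exchange (hab : b ^ 2 = a) {u : ℂ} (hu : u ≠ 0) (n : ℤ) :
    u * theta a (a ^ n * u⁻¹) * theta a (b * u) =
      -(b ^ n * theta a u * theta a (b * (a ^ n * u⁻¹))) := by
  have hv : ∀ n : ℤ, a ^ n * u⁻¹ ≠ 0 := fun n => mul_ne_zero (zpow_ne_zero n ha0) (inv_ne_zero hu)
  let P : ℤ → Prop := fun n => u * theta a (a ^ n * u⁻¹) * theta a (b * u) =
    -(b ^ n * theta a u * theta a (b * (a ^ n * u⁻¹)))
  have hstep : ∀ n, P (n + 1) ↔ P n := fun n => by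
    simp only [P]
    rw [zpow_add_one₀ ha0, zpow_add_one₀ hb, mul_comm _ a, mul_comm _ b, mul_assoc a]
    exact theta_exchange_mul_iff ha ha0 hb (hv n) _
  induction n using Int.induction_on with
  | zero =>
    have hsymm : theta a (b * u⁻¹) = theta a (b * u) := by
      rw [← theta_mul_inv ha ha0 (mul_ne_zero hb hu), ← hab]
      field_simp
    rw [zpow_zero, one_mul, zpow_zero, one_mul, hsymm, theta_inv ha hu]
    field_simp
  | succ n ih => exact (hstep n).2 ih
  | pred n ih => exact (hstep _).1 (by rwa [sub_add_cancel])

lemma theta_exchange_zpow (hab : b ^ 2 = a) {y : ℂ} (hy : y ≠ 0) (n : ℤ) :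
    y * theta a (y⁻¹ * b ^ n) * theta a (y * b * b ^ n) =
      -(theta a (y * b ^ n) * theta a (y⁻¹ * b * b ^ n)) := by
  have hbn : b ^ n ≠ 0 := zpow_ne_zero n hb
  have key := theta_exchange ha ha0 hb hab (mul_ne_zero hy hbn) n
  have hv : a ^ n * (y * b ^ n)⁻¹ = y⁻¹ * b ^ n := by
    rw [← hab, ← zpow_natCast b 2, ← zpow_mul, mul_comm _ n, zpow_mul, zpow_natCast]
    field_simp
  rw [hv, show b * (y * b ^ n) = y * b * b ^ n by ring,
    show b * (y⁻¹ * b ^ n) = y⁻¹ * b * b ^ n by ring] at key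
  apply mul_left_cancel₀ hbn
  linear_combination key

end theta

theorem Y_eq_one_of_p_eq_q_pow_general (q p : ℂ) (hq0 : 0 < ‖q‖)
    (hq1 : ‖q‖ < 1) (k : ℤ) (hpq : p = q ^ (2 * k))
    (m : ℕ) (x : ℂ) (hx : x ≠ 0)
    (hden : ∀ s ∈ Finset.Icc 1 (2 * m - 1),
      theta (q ^ 4) (x ^ 2 * p ^ (s : ℤ)) ≠ 0 ∧
      theta (q ^ 4) (x⁻¹ ^ 2 * q ^ 2 * p ^ (s : ℤ)) ≠ 0) :
    Yexch q p m x = 1 := by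
  have hq : q ≠ 0 := norm_pos_iff.1 hq0
  have ha : ‖q ^ 4‖ < 1 := by
    rw [norm_pow]
    exact pow_lt_one₀ (norm_nonneg q) hq1 (by norm_num)
  have hfactor : ∀ s ∈ Icc 1 (2 * m - 1),
      x ^ 2 * theta (q ^ 4) (x⁻¹ ^ 2 * p ^ (s : ℤ)) * theta (q ^ 4) (x ^ 2 * q ^ 2 * p ^ (s : ℤ)) /
        (theta (q ^ 4) (x ^ 2 * p ^ (s : ℤ)) * theta (q ^ 4) (x⁻¹ ^ 2 * q ^ 2 * p ^ (s : ℤ)))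
        = -1 := by
    intro s hs
    have hps : p ^ (s : ℤ) = (q ^ 2) ^ (k * s) := by
      rw [hpq, ← zpow_natCast q 2, ← zpow_mul, ← zpow_mul]
      ring_nf
    rw [div_eq_iff (mul_ne_zero (hden s hs).1 (hden s hs).2), hps, inv_pow,
      theta_exchange_zpow ha (pow_ne_zero 4 hq) (pow_ne_zero 2 hq) (by ring) (pow_ne_zero 2 hx)]
    ring
  rw [Yexch, prod_congr rfl hfactor, prod_const, ← pow_mul, pow_mul', neg_one_sq, one_pow]

theorem Y_eq_one_of_p_eq_q_pow (q p : ℂ) (hq0 : 0 < ‖q‖)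
    (hq1 : ‖q‖ < 1) (k : ℤ) (hk : k ≠ 0) (hpq : p = q ^ (2 * k))
    (m : ℕ) (hm : 0 < m) (x : ℂ) (hx : x ≠ 0)
    (hden : ∀ s ∈ Finset.Icc 1 (2 * m - 1),
      theta (q ^ 4) (x ^ 2 * p ^ (s : ℤ)) ≠ 0 ∧
      theta (q ^ 4) (x⁻¹ ^ 2 * q ^ 2 * p ^ (s : ℤ)) ≠ 0) :
    Yexch q p m x = 1 :=
  Y_eq_one_of_p_eq_q_pow_general q p hq0 hq1 k hpq m x hx hden
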